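/- Let U be an update procedure of countable ordinal α, let β < α be a limit ordinal, and let g be a sequence of ordinal β. If U_g has a U_g-generated finite zero, then there exists γ < β such that U_{g_{<γ}} has a U_{g_{<γ}}-generated finite zero (Reduction Lemma, limit case, part 2). -/

import Mathlib

/-- Transfinite sequences of functions are modeled as functions on all ordinals;
an update procedure of ordinal `α` only depends on (and only updates) the
entries with index below `α`, and a "sequence of ordinal `β`" is read off from
its entries with index below `β`. -/
abbrev OSeq := Ordinal → ℕ → ℕ

/-- `U` is an update procedure of ordinal `α`. -/
def IsUpdateProc (α : Ordinal) (U : OSeq → Option (Ordinal × ℕ × ℕ)) : Prop :=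
  (∀ f : OSeq, ∃ A : Finset (Ordinal × ℕ), (∀ p ∈ A, p.1 < α) ∧
      ∀ g : OSeq, (∀ p ∈ A, g p.1 p.2 = f p.1 p.2) → U g = U f) ∧
  (∀ (f : OSeq) (β : Ordinal) (n m : ℕ), U f = some (β, n, m) → β < α) ∧
  (∀ (f g : OSeq) (β : Ordinal) (n m i j : ℕ),
      (∀ γ, γ < β → f γ = g γ) →
      U f = some (β, n, m) → g β n = m → U g = some (β, i, j) → i ≠ n)

/-- A sequence is finite (below `α`) if it has nonzero values in only
finitely many places. -/
def OFinite (α : Ordinal) (f : OSeq) : Prop :=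
  Set.Finite {p : Ordinal × ℕ | p.1 < α ∧ f p.1 p.2 ≠ 0}

/-- Controlled update `f ⊕ u`: update the `γ`-th function at `n` to value `m`
and erase (reset to `0`) everything of higher index. -/
noncomputable def oplus (f : OSeq) : Option (Ordinal × ℕ × ℕ) → OSeq
  | none => f
  | some (γ, n, m) => fun β x =>
      if β < γ then f β x
      else if β = γ then (if x = n then m else f β x)
      else 0

/-- The learning process generated by `U`:
`U^(0)` is the constantly `0` sequence and `U^(i+1) = U^(i) ⊕ U(U^(i))`. -/
noncomputable def learnProc (U : OSeq → Option (Ordinal × ℕ × ℕ)) : ℕ → OSeq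
  | 0 => fun _ _ => 0
  | i + 1 => oplus (learnProc U i) (U (learnProc U i))

/-- `f` is `U`-generated. -/
def IsGenerated (U : OSeq → Option (Ordinal × ℕ × ℕ)) (f : OSeq) : Prop :=
  ∃ i : ℕ, f = learnProc U i

/-- Concatenation `g * f` of a sequence `g` of ordinal `β` with a sequence `f`:
entries below `β` come from `g`, higher entries from `f` (shifted by `β`). -/
noncomputable def concatSeq (β : Ordinal) (g f : OSeq) : OSeq :=
  fun δ => if δ < β then g δ else f (δ - β)

/-- The shifted procedure `U_g` (for `g` a sequence of ordinal `β`):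
`U_g f = (γ,n,m)` if `U (g * f) = (β + γ, n, m)`, and `U_g f = ∅` otherwise. -/
noncomputable def shiftU (U : OSeq → Option (Ordinal × ℕ × ℕ)) (β : Ordinal)
    (g : OSeq) : OSeq → Option (Ordinal × ℕ × ℕ) :=
  fun f =>
    match U (concatSeq β g f) with
    | none => none
    | some (δ, n, m) => if β ≤ δ then some (δ - β, n, m) else none

/-- The constantly zero sequence. -/
def zeroSeq : OSeq := fun _ _ => 0

/-! Only finitely many stages `L 0, …, L i` of the learning process of `U_g` are needed to reach
its zero, and by continuity `U` looks at only finitely many coordinates of each `g * L j`.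
Below the limit `β` these coordinates, together with the indices of the values `U (g * L j)`,
are bounded by some `γ < β`. Padding `L j` with `β - γ` zero functions then turns it into the
`j`-th stage of the learning process of `U_{g<γ}`: `U` cannot tell `g<γ * 0 * L j` from
`g * L j`, so the two processes take the same steps, shifted by `β - γ`. -/

lemma learnProc_support_finite (V : OSeq → Option (Ordinal × ℕ × ℕ)) (j : ℕ) :
    {p : Ordinal × ℕ | learnProc V j p.1 p.2 ≠ 0}.Finite := by
  induction j with
  | zero => simp [learnProc]
  | succ j ih =>
    rcases hV : V (learnProc V j) with _ | ⟨δ, n, m⟩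
    · simpa [learnProc, hV, oplus] using ih
    · refine (ih.union (Set.finite_singleton (δ, n))).subset fun ⟨ε, x⟩ hp => ?_
      simp only [Set.mem_ofPred_eq, Set.mem_union, Set.mem_singleton_iff, Prod.mk.injEq,
        learnProc, hV, oplus] at hp ⊢
      split_ifs at hp <;> simp_all

lemma concatSeq_zeroSeq_oplus (c : Ordinal) (f : OSeq) (u : Option (Ordinal × ℕ × ℕ)) :
    concatSeq c zeroSeq (oplus f u) =
      oplus (concatSeq c zeroSeq f) (u.map (Prod.map (c + ·) id)) := by
  rcases u with _ | ⟨e, n, m⟩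
  · rfl
  funext δ x
  rcases lt_or_ge δ c with hδ | hδ
  · have : δ < c + e := hδ.trans_le le_self_add
    simp [concatSeq, oplus, hδ, this, zeroSeq]
  · obtain ⟨ε, rfl⟩ : ∃ ε, δ = c + ε := ⟨δ - c, (Ordinal.add_sub_cancel_of_le hδ).symm⟩
    simp [concatSeq, oplus, Ordinal.add_sub_cancel]

lemma learnProc_eq_concatSeq_zeroSeq (V W : OSeq → Option (Ordinal × ℕ × ℕ)) (c : Ordinal)
    (i : ℕ) (h : ∀ j < i, V (concatSeq c zeroSeq (learnProc W j)) =
      (W (learnProc W j)).map (Prod.map (c + ·) id)) :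
    learnProc V i = concatSeq c zeroSeq (learnProc W i) := by
  induction i with
  | zero => funext δ x; simp only [learnProc, concatSeq]; split_ifs <;> rfl
  | succ i ih =>
    rw [learnProc, learnProc, ih fun j hj => h j (hj.trans i.lt_succ_self),
      h i i.lt_succ_self, concatSeq_zeroSeq_oplus]

lemma concatSeq_concatSeq_zeroSeq_apply (γ c δ : Ordinal) (g f : OSeq)
    (hδ : δ < γ ∨ γ + c ≤ δ) :
    concatSeq γ g (concatSeq c zeroSeq f) δ = concatSeq (γ + c) g f δ := by
  rcases hδ with hδ | hδ
  · simp [concatSeq, hδ, hδ.trans_le le_self_add]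
  · have hγ : ¬ δ < γ := not_lt.2 (le_self_add.trans hδ)
    have hc : ¬ δ - γ < c := by rw [Ordinal.sub_lt_of_le (not_lt.1 hγ)]; exact not_lt.2 hδ
    simp [concatSeq, hγ, hc, not_lt.2 hδ, Ordinal.sub_sub]

lemma shiftU_concatSeq_zeroSeq (U : OSeq → Option (Ordinal × ℕ × ℕ)) (γ c : Ordinal)
    (g f : OSeq) (hU : U (concatSeq γ g (concatSeq c zeroSeq f)) = U (concatSeq (γ + c) g f))
    (hgap : ∀ δ n m, U (concatSeq (γ + c) g f) = some (δ, n, m) → δ < γ ∨ γ + c ≤ δ) :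
    shiftU U γ g (concatSeq c zeroSeq f) =
      (shiftU U (γ + c) g f).map (Prod.map (c + ·) id) := by
  unfold shiftU
  rw [hU]
  rcases hUf : U (concatSeq (γ + c) g f) with _ | ⟨δ, n, m⟩
  · rfl
  rcases hgap δ n m hUf with hδ | hδ
  · have hδc : ¬ γ + c ≤ δ := fun h => (hδ.trans_le (le_self_add.trans h)).false
    simp [not_le.2 hδ, hδc]
  · have hsub : δ - γ = c + (δ - (γ + c)) := by
      rw [← Ordinal.sub_sub, Ordinal.add_sub_cancel_of_le (Ordinal.le_sub_of_add_le hδ)]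
    simp [hδ, le_self_add.trans hδ, hsub]

lemma exists_lt_of_isSuccLimit_finset {β : Ordinal} (hβ : Order.IsSuccLimit β)
    (s : Finset Ordinal) : ∃ γ < β, ∀ x ∈ s, x < β → x < γ := by
  set t := s.filter (· < β)
  have ht : t.sup id < β := (Finset.sup_lt_iff hβ.bot_lt).2 fun x hx => (Finset.mem_filter.1 hx).2
  exact ⟨Order.succ (t.sup id), hβ.succ_lt ht, fun x hx hxβ =>
    Order.lt_succ_of_le (Finset.le_sup (f := id) (Finset.mem_filter.2 ⟨hx, hxβ⟩))⟩

theorem reduction_lemma_limit_part2_general (α : Ordinal)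
    (U : OSeq → Option (Ordinal × ℕ × ℕ)) (hU : IsUpdateProc α U)
    (β : Ordinal) (hβ : Order.IsSuccLimit β) (g : OSeq)
    (hz : ∃ f : OSeq, IsGenerated (shiftU U β g) f ∧
      OFinite (α - β) f ∧ shiftU U β g f = none) :
    ∃ γ, γ < β ∧ ∃ f : OSeq, IsGenerated (shiftU U γ g) f ∧
      OFinite (α - γ) f ∧ shiftU U γ g f = none := by
  classical
  choose A _ hA using hU.1
  obtain ⟨-, ⟨i, rfl⟩, -, hzero⟩ := hz
  set S : ℕ → Finset Ordinal := fun j =>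
    (A (concatSeq β g (learnProc (shiftU U β g) j))).image Prod.fst ∪
      ((U (concatSeq β g (learnProc (shiftU U β g) j))).map Prod.fst).toFinset
  obtain ⟨γ, hγβ, hγ⟩ := exists_lt_of_isSuccLimit_finset hβ ((Finset.range (i + 1)).biUnion S)
  have hgap : ∀ j ≤ i, ∀ δ ∈ S j, δ < γ ∨ β ≤ δ := fun j hj δ hδ =>
    (lt_or_ge δ β).imp_left
      (hγ δ (Finset.mem_biUnion.2 ⟨j, Finset.mem_range.2 (Nat.lt_succ_of_le hj), hδ⟩))
  obtain ⟨c, rfl⟩ : ∃ c, β = γ + c := ⟨β - γ, (Ordinal.add_sub_cancel_of_le hγβ.le).symm⟩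
  have hstep : ∀ j ≤ i, shiftU U γ g (concatSeq c zeroSeq (learnProc (shiftU U (γ + c) g) j)) =
      (shiftU U (γ + c) g (learnProc (shiftU U (γ + c) g) j)).map (Prod.map (c + ·) id) := by
    intro j hj
    apply shiftU_concatSeq_zeroSeq
    · exact hA _ _ fun p hp => congrFun (concatSeq_concatSeq_zeroSeq_apply γ c p.1 g _
        (hgap j hj p.1 (Finset.mem_union_left _ (Finset.mem_image_of_mem _ hp)))) p.2
    · exact fun δ n m h => hgap j hj δ (by simp [S, h])
  have hL := learnProc_eq_concatSeq_zeroSeq _ _ c i fun j hj => hstep j hj.le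
  refine ⟨γ, hγβ, _, ⟨i, rfl⟩, (learnProc_support_finite _ i).subset fun p hp => hp.2, ?_⟩
  rw [hL, hstep i le_rfl, hzero, Option.map_none]

/-- Reduction Lemma (limit case, part 2): let `U` be an update procedure of
countable ordinal `α`, `β < α` a limit ordinal, and `g` a sequence of ordinal
`β`. If `U_g` has a `U_g`-generated finite zero, then there is `γ < β` such
that `U_{g_{<γ}}` has a `U_{g_{<γ}}`-generated finite zero. -/
theorem reduction_lemma_limit_part2 (α : Ordinal)
    (hcount : α.card ≤ Cardinal.aleph0)
    (U : OSeq → Option (Ordinal × ℕ × ℕ)) (hU : IsUpdateProc α U)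
    (β : Ordinal) (hβα : β < α) (hβ : Order.IsSuccLimit β) (g : OSeq)
    (hz : ∃ f : OSeq, IsGenerated (shiftU U β g) f ∧
      OFinite (α - β) f ∧ shiftU U β g f = none) :
    ∃ γ, γ < β ∧ ∃ f : OSeq, IsGenerated (shiftU U γ g) f ∧
      OFinite (α - γ) f ∧ shiftU U γ g f = none :=
  reduction_lemma_limit_part2_general α U hU β hβ g hz
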